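/- Let J(r) = r^{-α} and for n ≥ 1 define the single-bubble energy H̲_J(n) = 2·∑_{x=1}^{n} ∑_{y∈ℤ∖{1,…,n}} |x−y|^{−α}. If 1 < α < 2 then H̲_J(n) ≥ 4 + (4/((α−1)(2−α)))·((n+1)^{2−α} − 2^{2−α}); if α = 2 then H̲_J(n) ≥ 4 + 4·log(1+n) − 4·log 2. -/

import Mathlib

/-! Each site `x` of the bubble `{1,…,n}` interacts with the half-lines `y ≤ 0` and
`y ≥ n + 1` with total strength at least `ζ(α, x) + ζ(α, n + 1 - x)`, where
`ζ(α, r) = ∑_{k ≥ 0} (r + k)^{-α}` (`hurwitzSum`); by the symmetry `x ↦ n + 1 - x`,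
`H̲(n) ≥ 4 ∑_{x=1}^n ζ(α, x)`. Comparison with the integral of `t^{-α}` gives
`ζ(α, x) ≥ x^{1-α}/(α-1)`, while `ζ(α, 1) ≥ 1`. For `x ≥ 2` the term `x^{1-α}/(α-1)` dominates
the increment of `x^{2-α}/((α-1)(2-α))` (for `α < 2`, by concavity) or of `log x` (for `α = 2`),
and the sum telescopes. -/

noncomputable section

/-- The single-bubble energy `H̲_J(n)`: the energy of the configuration equal to `−1`
exactly on `{1,…,n}`, for the coupling `J(r) = r^{-α}`. -/
def Hbar (α : ℝ) (n : ℕ) : ℝ :=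
  2 * ∑ x ∈ Finset.Icc (1 : ℤ) (n : ℤ), ∑' y : ℤ,
      if y ∈ Finset.Icc (1 : ℤ) (n : ℤ) then 0 else |(x : ℝ) - (y : ℝ)| ^ (-α)

open Finset Filter Topology

section RpowIncrements

variable {s : ℝ}

theorem exists_rpow_add_one_sub_rpow_eq (hs : 0 < s) (p : ℝ) :
    ∃ c ∈ Set.Ioo s (s + 1), (s + 1) ^ p - s ^ p = p * c ^ (p - 1) := by
  obtain ⟨c, hc, hslope⟩ := exists_hasDerivAt_eq_slope (fun t : ℝ => t ^ p)
    (fun t : ℝ => p * t ^ (p - 1)) (lt_add_one s)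
    (continuousOn_id.rpow_const fun t ht => Or.inl (hs.trans_le ht.1).ne')
    (fun t ht => Real.hasDerivAt_rpow_const (Or.inl (hs.trans ht.1).ne'))
  exact ⟨c, hc, by simpa using hslope.symm⟩

theorem rpow_add_one_sub_rpow_le (hs : 0 < s) {p : ℝ} (hp0 : 0 ≤ p) (hp1 : p ≤ 1) :
    (s + 1) ^ p - s ^ p ≤ p * s ^ (p - 1) := by
  obtain ⟨c, hc, hmvt⟩ := exists_rpow_add_one_sub_rpow_eq hs p
  rw [hmvt]
  exact mul_le_mul_of_nonneg_left
    (Real.rpow_le_rpow_of_nonpos hs hc.1.le (by linarith)) hp0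

theorem mul_rpow_le_rpow_add_one_sub_rpow (hs : 0 < s) {p : ℝ} (hp : p ≤ 0) :
    p * s ^ (p - 1) ≤ (s + 1) ^ p - s ^ p := by
  obtain ⟨c, hc, hmvt⟩ := exists_rpow_add_one_sub_rpow_eq hs p
  rw [hmvt]
  exact mul_le_mul_of_nonpos_left
    (Real.rpow_le_rpow_of_nonpos hs hc.1.le (by linarith)) hp

theorem rpow_add_one_div_sub_rpow_div_le {α : ℝ} (hα1 : 1 < α) (hα2 : α < 2) (hs : 0 < s) :
    (s + 1) ^ (2 - α) / ((α - 1) * (2 - α)) - s ^ (2 - α) / ((α - 1) * (2 - α)) ≤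
      s ^ (1 - α) / (α - 1) := by
  have hincr := rpow_add_one_sub_rpow_le hs (by linarith : 0 ≤ 2 - α) (by linarith : 2 - α ≤ 1)
  rw [show 2 - α - 1 = 1 - α by ring] at hincr
  rw [← sub_div, div_le_div_iff₀ (by nlinarith) (by linarith),
    show s ^ (1 - α) * ((α - 1) * (2 - α)) = (2 - α) * s ^ (1 - α) * (α - 1) by ring]
  exact mul_le_mul_of_nonneg_right hincr (by linarith)

theorem log_add_one_sub_log_le (hs : 0 < s) : Real.log (s + 1) - Real.log s ≤ s⁻¹ := by
  have h := Real.log_le_sub_one_of_pos (show 0 < (s + 1) / s by positivity)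
  rw [Real.log_div (by positivity) hs.ne', add_div, div_self hs.ne', one_div] at h
  linarith

end RpowIncrements

def hurwitzSum (α r : ℝ) : ℝ := ∑' k : ℕ, (r + k) ^ (-α)

section HurwitzSum

variable {α r : ℝ}

theorem summable_add_nat_rpow_neg (hα : 1 < α) (hr : 0 ≤ r) :
    Summable fun k : ℕ => (r + k) ^ (-α) := by
  rw [← summable_nat_add_iff 1]
  have hpseries := (summable_nat_add_iff 1).2 ((Real.summable_nat_rpow (p := -α)).2 (by linarith))
  refine hpseries.of_nonneg_of_le (fun k => by positivity) fun k => ?_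
  exact Real.rpow_le_rpow_of_nonpos (by positivity) (by push_cast; linarith) (by linarith)

theorem rpow_neg_le_hurwitzSum (hα : 1 < α) (hr : 0 ≤ r) : r ^ (-α) ≤ hurwitzSum α r := by
  simpa [hurwitzSum] using (summable_add_nat_rpow_neg hα hr).le_tsum 0 fun k _ => by positivity

-- Comparison with `∫_r^∞ t^{-α} dt`, through the telescoping sum of `(r + k) ^ (1 - α)`.
theorem rpow_div_le_hurwitzSum (hα : 1 < α) (hr : 0 < r) :
    r ^ (1 - α) / (α - 1) ≤ hurwitzSum α r := by
  have hdecay : Tendsto (fun N : ℕ => (r + N) ^ (1 - α)) atTop (𝓝 0) := by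
    rw [show 1 - α = -(α - 1) by ring]
    exact (tendsto_rpow_neg_atTop (by linarith)).comp
      (tendsto_atTop_add_const_left _ r tendsto_natCast_atTop_atTop)
  have hlim : Tendsto (fun N : ℕ => (r ^ (1 - α) - (r + N) ^ (1 - α)) / (α - 1)) atTop
      (𝓝 (r ^ (1 - α) / (α - 1))) := by
    simpa using (hdecay.const_sub (r ^ (1 - α))).div_const (α - 1)
  refine le_of_tendsto' hlim fun N => ?_
  calc (r ^ (1 - α) - (r + N) ^ (1 - α)) / (α - 1)
      = ∑ k ∈ range N, ((r + k) ^ (1 - α) - (r + k + 1) ^ (1 - α)) / (α - 1) := by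
        rw [← sum_div]
        congr 1
        simpa [add_assoc] using (sum_range_sub' (fun k : ℕ => (r + k) ^ (1 - α)) N).symm
    _ ≤ ∑ k ∈ range N, (r + k) ^ (-α) := by
        refine sum_le_sum fun k _ => ?_
        have hstep := mul_rpow_le_rpow_add_one_sub_rpow
          (show 0 < r + k by positivity) (show 1 - α ≤ 0 by linarith)
        rw [show 1 - α - 1 = -α by ring] at hstep
        rw [div_le_iff₀ (by linarith)]
        linarith
    _ ≤ hurwitzSum α r :=
        (summable_add_nat_rpow_neg hα hr.le).sum_le_tsum _ fun k _ => by positivity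

end HurwitzSum

theorem hurwitzSum_add_le_tsum_row {α : ℝ} (hα : 1 < α) {n : ℕ} {x : ℤ} (hx1 : 1 ≤ x)
    (hxn : x ≤ n) :
    hurwitzSum α x + hurwitzSum α (n + 1 - x) ≤
      ∑' y : ℤ, if y ∈ Icc (1 : ℤ) n then 0 else |(x : ℝ) - y| ^ (-α) := by
  set row : ℤ → ℝ := fun y => if y ∈ Icc (1 : ℤ) n then 0 else |(x : ℝ) - y| ^ (-α)
  have hrow_nonneg : ∀ y, 0 ≤ row y := fun y => by
    dsimp only [row]; split_ifs <;> positivity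
  have hrow : Summable row := by
    refine ((Real.summable_abs_int_rpow hα).comp_injective (sub_right_injective (b := x))
      ).of_nonneg_of_le hrow_nonneg fun y => ?_
    dsimp only [row, Function.comp]
    split_ifs
    · positivity
    · push_cast; rfl
  let halfLines : ℕ ⊕ ℕ → ℤ := Sum.elim (fun k => -k) (fun k => n + 1 + k)
  have hinj : Function.Injective halfLines :=
    Function.Injective.sumElim (fun a b h => by simpa using h) (fun a b h => by simpa using h)
      fun a b => by omega
  have hhalf : Summable (row ∘ halfLines) := hrow.comp_injective hinj
  have hleft : ∑' k, (row ∘ halfLines) (.inl k) = hurwitzSum α x := by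
    refine tsum_congr fun k => ?_
    have hk : -(k : ℤ) ∉ Icc (1 : ℤ) n := by simp only [mem_Icc]; omega
    simp only [Function.comp, halfLines, Sum.elim_inl, row, if_neg hk]
    have hx : (1 : ℝ) ≤ x := by exact_mod_cast hx1
    rw [abs_of_nonneg (by push_cast; linarith [(k.cast_nonneg : (0 : ℝ) ≤ k)])]
    push_cast; ring_nf
  have hright : ∑' k, (row ∘ halfLines) (.inr k) = hurwitzSum α (n + 1 - x) := by
    refine tsum_congr fun k => ?_
    have hk : (n : ℤ) + 1 + k ∉ Icc (1 : ℤ) n := by simp only [mem_Icc]; omega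
    simp only [Function.comp, halfLines, Sum.elim_inr, row, if_neg hk]
    have hxn' : (x : ℝ) ≤ n := by exact_mod_cast hxn
    rw [abs_of_nonpos (by push_cast; linarith [(k.cast_nonneg : (0 : ℝ) ≤ k)])]
    push_cast; ring_nf
  calc hurwitzSum α x + hurwitzSum α (n + 1 - x)
      = ∑' i, (row ∘ halfLines) i := by
        rw [Summable.tsum_sum (hhalf.comp_injective Sum.inl_injective)
          (hhalf.comp_injective Sum.inr_injective), hleft, hright]
    _ ≤ ∑' y, row y :=
        hhalf.tsum_le_tsum_of_inj halfLines hinj (fun y _ => hrow_nonneg y) (fun _ => le_rfl) hrow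

theorem four_mul_sum_hurwitzSum_le_Hbar {α : ℝ} (hα : 1 < α) (n : ℕ) :
    4 * ∑ i ∈ Icc 1 n, hurwitzSum α i ≤ Hbar α n := by
  have hcast : ∑ i ∈ Icc 1 n, hurwitzSum α i = ∑ x ∈ Icc (1 : ℤ) n, hurwitzSum α x :=
    sum_nbij' (fun i : ℕ => (i : ℤ)) Int.toNat
      (fun i hi => by simp only [mem_Icc] at hi ⊢; omega)
      (fun x hx => by simp only [mem_Icc] at hx ⊢; omega)
      (fun i _ => by simp) (fun x hx => by simp only [mem_Icc] at hx; omega)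
      (fun i _ => by simp)
  have hreflect : ∑ x ∈ Icc (1 : ℤ) n, hurwitzSum α (n + 1 - x) =
      ∑ x ∈ Icc (1 : ℤ) n, hurwitzSum α x :=
    sum_nbij' (fun x => n + 1 - x) (fun x => n + 1 - x)
      (fun x hx => by simp only [mem_Icc] at hx ⊢; omega)
      (fun x hx => by simp only [mem_Icc] at hx ⊢; omega)
      (fun x _ => by ring) (fun x _ => by ring) (fun x _ => by push_cast; ring_nf)
  calc 4 * ∑ i ∈ Icc 1 n, hurwitzSum α i
      = 2 * ∑ x ∈ Icc (1 : ℤ) n, (hurwitzSum α x + hurwitzSum α (n + 1 - x)) := by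
        rw [sum_add_distrib, hreflect, hcast]; ring
    _ ≤ Hbar α n := by
        unfold Hbar
        gcongr with x hx
        rw [mem_Icc] at hx
        exact hurwitzSum_add_le_tsum_row hα hx.1 hx.2

theorem le_Hbar_of_increment_le {α : ℝ} (hα : 1 < α) {Φ : ℝ → ℝ}
    (hΦ : ∀ s : ℝ, 2 ≤ s → Φ (s + 1) - Φ s ≤ s ^ (1 - α) / (α - 1)) {n : ℕ} (hn : 1 ≤ n) :
    4 + 4 * (Φ (n + 1) - Φ 2) ≤ Hbar α n := by
  have htelescope : Φ (n + 1) - Φ 2 ≤ ∑ i ∈ Ico 2 (n + 1), hurwitzSum α i := by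
    have hsum := sum_Ico_sub (fun i : ℕ => Φ i) (show 2 ≤ n + 1 by omega)
    push_cast at hsum
    rw [← hsum]
    refine sum_le_sum fun i hi => ?_
    have hi2 : (2 : ℝ) ≤ i := by exact_mod_cast (mem_Ico.1 hi).1
    exact (hΦ i hi2).trans (rpow_div_le_hurwitzSum hα (by linarith))
  calc 4 + 4 * (Φ (n + 1) - Φ 2)
      ≤ 4 * (hurwitzSum α 1 + ∑ i ∈ Ico 2 (n + 1), hurwitzSum α i) := by
        have hfirst := rpow_neg_le_hurwitzSum hα zero_le_one
        rw [Real.one_rpow] at hfirst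
        linarith
    _ = 4 * ∑ i ∈ Icc 1 n, hurwitzSum α i := by
        rw [← Ico_add_one_right_eq_Icc, sum_eq_sum_Ico_succ_bot (show 1 < n + 1 by omega),
          Nat.cast_one]
    _ ≤ Hbar α n := four_mul_sum_hurwitzSum_le_Hbar hα n

theorem single_bubble_lower_bound_general (α : ℝ) (hα1 : 1 < α) (n : ℕ) (hn : 1 ≤ n) :
    (α < 2 → 4 + 4 / ((α - 1) * (2 - α)) * (((n : ℝ) + 1) ^ (2 - α) - (2 : ℝ) ^ (2 - α))
        ≤ Hbar α n) ∧
    (α = 2 → 4 + 4 * Real.log (1 + (n : ℝ)) - 4 * Real.log 2 ≤ Hbar α n) := by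
  refine ⟨fun hlt => ?_, fun heq => ?_⟩
  · convert le_Hbar_of_increment_le hα1 (Φ := fun s => s ^ (2 - α) / ((α - 1) * (2 - α)))
      (fun s hs => rpow_add_one_div_sub_rpow_div_le hα1 hlt (by linarith)) hn using 2
    ring
  · subst heq
    have hbound := le_Hbar_of_increment_le hα1 (Φ := Real.log) (fun s hs => ?_) hn
    · rw [add_comm 1]
      linarith
    rw [show (1 : ℝ) - 2 = -1 by norm_num, Real.rpow_neg_one, show (2 : ℝ) - 1 = 1 by norm_num,
      div_one]
    exact log_add_one_sub_log_le (by linarith)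

/-- lower bounds for the single-bubble energy (Lemma `campos`). -/
theorem single_bubble_lower_bound (α : ℝ) (hα1 : 1 < α) (hα2 : α ≤ 2) (n : ℕ) (hn : 1 ≤ n) :
    (α < 2 → 4 + 4 / ((α - 1) * (2 - α)) * (((n : ℝ) + 1) ^ (2 - α) - (2 : ℝ) ^ (2 - α))
        ≤ Hbar α n) ∧
    (α = 2 → 4 + 4 * Real.log (1 + (n : ℝ)) - 4 * Real.log 2 ≤ Hbar α n) :=
  single_bubble_lower_bound_general α hα1 n hn
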